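/- arXiv:2311.03914 — 3 statements merged into one kernel-verified Lean document; each statement's English description precedes it below -/
import Mathlib

section
/- Let F : [0,∞) → [0,∞) be differentiable and let λ ≥ 0 and C > 0 be constants such that F'(t) + (λ - C e^{-t}) F(t) ≤ C e^{-λ t} for all t ≥ 0. Then there exists a constant K > 0 such that F(t) ≤ K (1 + t) e^{-λ t} for all t ≥ 0. -/
theorem gronwall_type_resonant
    (F : ℝ → ℝ) (lam C : ℝ)
    (hlam : 0 ≤ lam) (hC : 0 < C)
    (hFpos : ∀ t, 0 ≤ t → 0 ≤ F t)
    (hFdiff : ∀ t, 0 ≤ t → DifferentiableAt ℝ F t)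
    (hF : ∀ t, 0 ≤ t →
      deriv F t + (lam - C * Real.exp (-t)) * F t ≤ C * Real.exp (-lam * t)) :
    ∃ K > 0, ∀ t, 0 ≤ t → F t ≤ K * (1 + t) * Real.exp (-lam * t) := by
  set u : ℝ → ℝ := fun t => lam * t + C * Real.exp (-t) with hu
  set g : ℝ → ℝ := fun t => F t * Real.exp (u t) - C * Real.exp C * t with hgdef
  have hud : ∀ t : ℝ, HasDerivAt u (lam - C * Real.exp (-t)) t := by
    intro t
    have h1 : HasDerivAt (fun t : ℝ => lam * t) lam t := by
      simpa using (hasDerivAt_id t).const_mul lam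
    have h2 : HasDerivAt (fun t : ℝ => Real.exp (-t)) (-Real.exp (-t)) t := by
      simpa [Function.comp_def] using ((Real.hasDerivAt_exp (-t)).comp t (hasDerivAt_neg t))
    have := h1.add (h2.const_mul C)
    simpa [hu, mul_comm, sub_eq_add_neg, mul_neg, Pi.add_def] using this
  have hgd : ∀ t : ℝ, 0 ≤ t → HasDerivAt g
      (deriv F t * Real.exp (u t) + F t * (Real.exp (u t) * (lam - C * Real.exp (-t)))
        - C * Real.exp C) t := by
    intro t ht
    have hμ : HasDerivAt (fun t => Real.exp (u t))
        (Real.exp (u t) * (lam - C * Real.exp (-t))) t := (hud t).exp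
    have hprod := ((hFdiff t ht).hasDerivAt).mul hμ
    have hlin : HasDerivAt (fun t : ℝ => C * Real.exp C * t) (C * Real.exp C) t := by
      simpa using (hasDerivAt_id t).const_mul (C * Real.exp C)
    simpa [hgdef, Pi.sub_def, Pi.mul_def] using hprod.sub hlin
  have hganti : AntitoneOn g (Set.Ici (0 : ℝ)) := by
    apply antitoneOn_of_deriv_nonpos (convex_Ici 0)
    · intro t ht
      exact ((hgd t ht).differentiableAt).continuousAt.continuousWithinAt
    · intro t ht
      rw [interior_Ici] at ht
      exact ((hgd t (le_of_lt ht)).differentiableAt).differentiableWithinAt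
    · intro t ht
      rw [interior_Ici] at ht
      have ht' : (0:ℝ) ≤ t := le_of_lt ht
      rw [(hgd t ht').deriv]
      have hμpos : 0 < Real.exp (u t) := Real.exp_pos _
      have hmul : (deriv F t + (lam - C * Real.exp (-t)) * F t) * Real.exp (u t)
          ≤ C * Real.exp (-lam * t) * Real.exp (u t) :=
        mul_le_mul_of_nonneg_right (hF t ht') hμpos.le
      have hexp : C * Real.exp (-lam * t) * Real.exp (u t) ≤ C * Real.exp C := by
        rw [mul_assoc, ← Real.exp_add]
        have : -lam * t + u t = C * Real.exp (-t) := by simp only [hu]; ring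
        rw [this]
        have h1 : Real.exp (-t) ≤ 1 := Real.exp_le_one_iff.mpr (by linarith)
        have h2 : C * Real.exp (-t) ≤ C := by nlinarith [Real.exp_pos (-t)]
        exact mul_le_mul_of_nonneg_left (Real.exp_le_exp.mpr h2) hC.le
      nlinarith [hmul, hexp]
  have hF0' : 0 ≤ F 0 := hFpos 0 le_rfl
  refine ⟨Real.exp C * (F 0 + C), by positivity, ?_⟩
  intro t ht
  have hkey : g t ≤ g 0 := hganti (Set.self_mem_Ici) ht ht
  have hg0 : g 0 = F 0 * Real.exp C := by simp [hgdef, hu]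
  rw [hg0] at hkey
  -- g t = F t * exp (u t) - C * exp C * t
  have hFle : F t * Real.exp (u t) ≤ F 0 * Real.exp C + C * Real.exp C * t := by
    have : F t * Real.exp (u t) - C * Real.exp C * t ≤ F 0 * Real.exp C := hkey
    linarith
  have hμge : Real.exp (lam * t) ≤ Real.exp (u t) := by
    apply Real.exp_le_exp.mpr
    have : 0 ≤ C * Real.exp (-t) := by positivity
    simp [hu]; linarith
  have h1 : F t * Real.exp (lam * t) ≤ F t * Real.exp (u t) :=
    mul_le_mul_of_nonneg_left hμge (hFpos t ht)
  have h2 : F 0 * Real.exp C + C * Real.exp C * t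
      ≤ Real.exp C * (F 0 + C) * (1 + t) := by
    have hF0 : 0 ≤ F 0 := hFpos 0 le_rfl
    have hE : 0 < Real.exp C := Real.exp_pos _
    nlinarith [mul_nonneg (mul_nonneg hE.le hF0) ht]
  have h3 : F t * Real.exp (lam * t) ≤ Real.exp C * (F 0 + C) * (1 + t) := by
    linarith
  have hE : 0 < Real.exp (lam * t) := Real.exp_pos _
  rw [neg_mul, Real.exp_neg, ← div_eq_mul_inv, le_div_iff₀ hE]
  linarith
end

section
/- For every smooth function ψ on the half-plane H = {(r,z) : r > 0, z ∈ ℝ} with sufficient decay, the weighted Hardy-type inequality holds: ∫_H ψ(r,z)² r e^{-(r²+z²)/4} dr dz ≲ ∫_H ψ(r,z)² r³ e^{-(r²+z²)/4} dr dz + ∫_H (∂_r ψ(r,z))² r³ e^{-(r²+z²)/4} dr dz, i.e., there exists a universal constant C such that the left-hand side is at most C times the right-hand side. -/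
open MeasureTheory Set Filter Topology

/-- The meridional half-plane `H = {(r,z) : r > 0}`. -/
def halfPlane : Set (ℝ × ℝ) := Set.Ioi (0:ℝ) ×ˢ (Set.univ : Set ℝ)

private lemma amgm_bound (a b r w : ℝ) (hr : 0 < r) (hw : 0 < w) :
    |2 * a * b * r ^ 2 * w| ≤ a ^ 2 * r * w + b ^ 2 * r ^ 3 * w := by
  rw [abs_le]
  constructor
  · nlinarith [sq_nonneg (a + b * r), mul_pos hr hw, sq_nonneg a, sq_nonneg b]
  · nlinarith [sq_nonneg (a - b * r), mul_pos hr hw, sq_nonneg a, sq_nonneg b]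

/-- 1D weighted Hardy inequality on `(0,∞)`. -/
lemma oneDim_hardy (c : ℝ) (f f' : ℝ → ℝ) (hder : ∀ r, HasDerivAt f (f' r) r)
    (hf'c : Continuous f')
    (h1 : IntegrableOn (fun r => f r ^ 2 * r * Real.exp (-(r ^ 2 + c) / 4)) (Ioi 0))
    (h3 : IntegrableOn (fun r => f r ^ 2 * r ^ 3 * Real.exp (-(r ^ 2 + c) / 4)) (Ioi 0))
    (hd : IntegrableOn (fun r => f' r ^ 2 * r ^ 3 * Real.exp (-(r ^ 2 + c) / 4)) (Ioi 0)) :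
    (∫ r in Ioi (0:ℝ), f r ^ 2 * r * Real.exp (-(r ^ 2 + c) / 4)) ≤
      (1/2) * (∫ r in Ioi (0:ℝ), f r ^ 2 * r ^ 3 * Real.exp (-(r ^ 2 + c) / 4)) +
      ∫ r in Ioi (0:ℝ), f' r ^ 2 * r ^ 3 * Real.exp (-(r ^ 2 + c) / 4) := by
  have hfc : Continuous f := continuous_iff_continuousAt.mpr fun x => (hder x).continuousAt
  set w : ℝ → ℝ := fun r => Real.exp (-(r ^ 2 + c) / 4) with hw_def
  have hwpos : ∀ r, 0 < w r := fun r => Real.exp_pos _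
  have hwcont : Continuous w := by
    apply Real.continuous_exp.comp
    continuity
  have hwder : ∀ r, HasDerivAt w (-(r / 2) * w r) r := by
    intro r
    have h0 : HasDerivAt (fun x : ℝ => -(x ^ 2 + c) / 4) (-(r / 2)) r := by
      have h := (((hasDerivAt_pow 2 r).add_const c).neg).div_const 4
      refine h.congr_deriv ?_
      push_cast
      ring
    have := h0.exp
    convert this using 1
    ring
  set g : ℝ → ℝ := fun r => f r ^ 2 * r ^ 2 * w r with hg_def
  set G : ℝ → ℝ := fun r =>
    2 * f r * f' r * r ^ 2 * w r + f r ^ 2 * (2 * r - r ^ 3 / 2) * w r with hG_def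
  have hgder : ∀ r, HasDerivAt g (G r) r := by
    intro r
    have h2 := (hder r).pow 2
    have hprod := (h2.mul (hasDerivAt_pow 2 r)).mul (hwder r)
    refine hprod.congr_deriv ?_
    simp only [Pi.mul_apply, Pi.pow_apply, hG_def]
    push_cast
    ring
  have hgnn : ∀ r, 0 ≤ g r := by
    intro r
    have := (hwpos r).le
    positivity
  -- integrability of the pieces
  set P : ℝ → ℝ := fun r => 2 * f r * f' r * r ^ 2 * w r with hP_def
  have hPcont : Continuous P :=
    (((continuous_const.mul hfc).mul hf'c).mul (continuous_pow 2)).mul hwcont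
  have hPint : IntegrableOn P (Ioi 0) := by
    apply Integrable.mono (h1.add hd) hPcont.aestronglyMeasurable
    filter_upwards [ae_restrict_mem measurableSet_Ioi] with r hr
    have hr0 : (0:ℝ) < r := hr
    have hb := amgm_bound (f r) (f' r) r (w r) hr0 (hwpos r)
    rw [Real.norm_eq_abs, Real.norm_eq_abs]
    have hnn : 0 ≤ f r ^ 2 * r * w r + f' r ^ 2 * r ^ 3 * w r := by
      have := (hwpos r).le
      positivity
    simp only [Pi.add_apply, Real.norm_eq_abs]
    rw [abs_of_nonneg hnn]
    exact hb
  have hGeq : G = fun r =>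
      P r + (2 * (f r ^ 2 * r * w r) - (1/2) * (f r ^ 2 * r ^ 3 * w r)) := by
    funext r
    simp only [hG_def, hP_def]
    ring
  have hGint : IntegrableOn G (Ioi 0) := by
    rw [hGeq]
    exact hPint.add ((h1.const_mul 2).sub (h3.const_mul (1/2)))
  have hGcont : Continuous G := by
    apply hPcont.add
    exact ((hfc.pow 2).mul (by continuity)).mul hwcont
  -- FTC
  have hftc : ∀ a b : ℝ, ∫ r in a..b, G r = g b - g a := fun a b =>
    intervalIntegral.integral_eq_sub_of_hasDerivAt (fun x _ => hgder x)
      (hGcont.intervalIntegrable a b)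
  have htend : ∀ a : ℝ, 0 < a → Tendsto g atTop (𝓝 (g a + ∫ r in Ioi a, G r)) := by
    intro a ha
    have hInt : IntegrableOn G (Ioi a) := hGint.mono_set (Ioi_subset_Ioi ha.le)
    have h := intervalIntegral_tendsto_integral_Ioi a hInt tendsto_id
    have h' : Tendsto (fun b => g b - g a) atTop (𝓝 (∫ r in Ioi a, G r)) := by
      refine h.congr fun b => ?_
      exact hftc a b
    have h'' := h'.add_const (g a)
    simp only [sub_add_cancel] at h''
    have hcomm : g a + ∫ r in Ioi a, G r = (∫ r in Ioi a, G r) + g a := add_comm _ _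
    rw [hcomm]
    exact h''
  set L : ℝ := g 1 + ∫ r in Ioi 1, G r with hL_def
  have hLim : Tendsto g atTop (𝓝 L) := htend 1 one_pos
  have hkey : ∀ a : ℝ, 0 < a → (∫ r in Ioi a, G r) = L - g a := by
    intro a ha
    have := tendsto_nhds_unique (htend a ha) hLim
    linarith
  have hLnn : 0 ≤ L := ge_of_tendsto hLim (Eventually.of_forall hgnn)
  -- L = 0
  have hL0 : L = 0 := by
    by_contra hne
    have hLpos : 0 < L := lt_of_le_of_ne hLnn (Ne.symm hne)
    have hev : ∀ᶠ r in atTop, L / 2 < g r :=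
      hLim.eventually (lt_mem_nhds (by linarith))
    obtain ⟨R, hR⟩ := eventually_atTop.1 hev
    set R' : ℝ := max R 1 with hR'_def
    have hR'pos : (0:ℝ) < R' := lt_of_lt_of_le one_pos (le_max_right _ _)
    have hint : IntegrableOn (fun r : ℝ => L / 2 * r⁻¹) (Ioi R') := by
      apply Integrable.mono (h1.mono_set (Ioi_subset_Ioi hR'pos.le))
      · exact (measurable_const.mul (measurable_id.inv)).aestronglyMeasurable
      · filter_upwards [ae_restrict_mem measurableSet_Ioi] with r hr
        have hrR : R' < r := hr
        have hr0 : (0:ℝ) < r := hR'pos.trans hrR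
        have hgr : L / 2 < g r := hR r (le_trans (le_max_left _ _) hrR.le)
        have heq : f r ^ 2 * r * w r = g r * r⁻¹ := by
          simp only [hg_def]
          field_simp
        rw [Real.norm_eq_abs, Real.norm_eq_abs,
          abs_of_nonneg (mul_nonneg (by linarith : (0:ℝ) ≤ L / 2) (inv_nonneg.mpr hr0.le)),
          abs_of_nonneg (mul_nonneg (mul_nonneg (sq_nonneg _) hr0.le) (Real.exp_pos _).le)]
        rw [heq]
        have hrinv : 0 < r⁻¹ := inv_pos.mpr hr0
        nlinarith [mul_le_mul_of_nonneg_right hgr.le hrinv.le]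
    have hint2 : IntegrableOn (fun r : ℝ => r⁻¹) (Ioi R') := by
      have h2 := hint.const_mul (2 / L)
      have : (fun r : ℝ => 2 / L * (L / 2 * r⁻¹)) = fun r : ℝ => r⁻¹ := by
        funext r
        rw [← mul_assoc, show 2 / L * (L / 2) = 1 by field_simp, one_mul]
      rwa [this] at h2
    have hint3 : IntegrableOn (fun r : ℝ => r ^ (-1 : ℝ)) (Ioi R') := by
      apply hint2.congr_fun _ measurableSet_Ioi
      intro x hx
      exact (Real.rpow_neg_one x).symm
    rw [integrableOn_Ioi_rpow_iff hR'pos] at hint3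
    linarith
  -- lower boundary: ∫_{Ioi 0} G ≤ 0
  have hIntG_le : (∫ r in Ioi (0:ℝ), G r) ≤ 0 := by
    set s : ℕ → Set ℝ := fun n => Ioi ((n + 1 : ℝ)⁻¹) with hs_def
    have hsm : ∀ n, MeasurableSet (s n) := fun n => measurableSet_Ioi
    have hmono : Monotone s := by
      intro n m hnm
      apply Ioi_subset_Ioi
      apply inv_anti₀ (by positivity)
      have : (n : ℝ) ≤ (m : ℝ) := Nat.cast_le.mpr hnm
      linarith
    have hunion : (⋃ n, s n) = Ioi (0:ℝ) := by
      ext x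
      simp only [mem_iUnion, mem_Ioi, hs_def]
      constructor
      · rintro ⟨n, hn⟩
        exact lt_trans (by positivity) hn
      · intro hx
        obtain ⟨n, hn⟩ := exists_nat_one_div_lt hx
        exact ⟨n, by rwa [one_div] at hn⟩
    have htend2 := tendsto_setIntegral_of_monotone hsm hmono (hunion ▸ hGint)
    rw [hunion] at htend2
    have heq : ∀ n : ℕ, (∫ r in s n, G r) = L - g ((n + 1 : ℝ)⁻¹) := by
      intro n
      exact hkey _ (by positivity)
    refine le_of_tendsto htend2 (Eventually.of_forall fun n => ?_)
    rw [heq n, hL0]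
    linarith [hgnn ((n + 1 : ℝ)⁻¹)]
  -- split the integral
  have h23int : IntegrableOn
      (fun r => 2 * (f r ^ 2 * r * w r) - (1/2) * (f r ^ 2 * r ^ 3 * w r)) (Ioi 0) :=
    (h1.const_mul 2).sub (h3.const_mul (1/2))
  have hsplit : (∫ r in Ioi (0:ℝ), G r) = (∫ r in Ioi (0:ℝ), P r) +
      (2 * (∫ r in Ioi (0:ℝ), f r ^ 2 * r * w r)
        - (1/2) * (∫ r in Ioi (0:ℝ), f r ^ 2 * r ^ 3 * w r)) := by
    rw [hGeq, integral_add hPint h23int, integral_sub (h1.const_mul 2) (h3.const_mul (1/2)),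
      integral_const_mul, integral_const_mul]
  -- lower bound on ∫ P
  have hPlow : -((∫ r in Ioi (0:ℝ), f r ^ 2 * r * w r)
      + (∫ r in Ioi (0:ℝ), f' r ^ 2 * r ^ 3 * w r)) ≤ ∫ r in Ioi (0:ℝ), P r := by
    have hmono2 : ∫ r in Ioi (0:ℝ), -(f r ^ 2 * r * w r + f' r ^ 2 * r ^ 3 * w r)
        ≤ ∫ r in Ioi (0:ℝ), P r := by
      apply setIntegral_mono_on ((h1.add hd).neg) hPint measurableSet_Ioi
      intro r hr
      have hr0 : (0:ℝ) < r := hr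
      have hb := amgm_bound (f r) (f' r) r (w r) hr0 (hwpos r)
      have := neg_abs_le (2 * f r * f' r * r ^ 2 * w r)
      simp only [Pi.neg_apply, Pi.add_apply, hP_def]
      linarith
    rw [integral_neg, integral_add h1 hd] at hmono2
    exact hmono2
  rw [hsplit] at hIntG_le
  linarith [hIntG_le, hPlow]

theorem hardy_type_inequality_2d :
    ∃ C > 0, ∀ ψ : ℝ × ℝ → ℝ, ContDiff ℝ (⊤ : ℕ∞) ψ →
      IntegrableOn (fun p => ψ p ^ 2 * p.1 * Real.exp (-(p.1 ^ 2 + p.2 ^ 2) / 4))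
        halfPlane →
      IntegrableOn (fun p => ψ p ^ 2 * p.1 ^ 3 * Real.exp (-(p.1 ^ 2 + p.2 ^ 2) / 4))
        halfPlane →
      IntegrableOn
        (fun p => (fderiv ℝ ψ p (1, 0)) ^ 2 * p.1 ^ 3 * Real.exp (-(p.1 ^ 2 + p.2 ^ 2) / 4))
        halfPlane →
      (∫ p in halfPlane, ψ p ^ 2 * p.1 * Real.exp (-(p.1 ^ 2 + p.2 ^ 2) / 4)) ≤
        C * ((∫ p in halfPlane, ψ p ^ 2 * p.1 ^ 3 * Real.exp (-(p.1 ^ 2 + p.2 ^ 2) / 4)) +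
          ∫ p in halfPlane,
            (fderiv ℝ ψ p (1, 0)) ^ 2 * p.1 ^ 3 * Real.exp (-(p.1 ^ 2 + p.2 ^ 2) / 4)) := by
  refine ⟨1, one_pos, fun ψ hψ h1 h3 hd => ?_⟩
  set F1 : ℝ × ℝ → ℝ := fun p => ψ p ^ 2 * p.1 * Real.exp (-(p.1 ^ 2 + p.2 ^ 2) / 4) with hF1
  set F3 : ℝ × ℝ → ℝ := fun p => ψ p ^ 2 * p.1 ^ 3 * Real.exp (-(p.1 ^ 2 + p.2 ^ 2) / 4) with hF3
  set FD : ℝ × ℝ → ℝ :=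
    fun p => (fderiv ℝ ψ p (1, 0)) ^ 2 * p.1 ^ 3 * Real.exp (-(p.1 ^ 2 + p.2 ^ 2) / 4) with hFD
  have hmeas : (volume : Measure (ℝ × ℝ)).restrict halfPlane
      = (volume.restrict (Ioi (0:ℝ))).prod (volume : Measure ℝ) := by
    rw [halfPlane, Measure.volume_eq_prod, ← Measure.prod_restrict,
      Measure.restrict_univ]
  have h1' : Integrable F1 ((volume.restrict (Ioi (0:ℝ))).prod (volume : Measure ℝ)) := by
    rw [← hmeas]; exact h1
  have h3' : Integrable F3 ((volume.restrict (Ioi (0:ℝ))).prod (volume : Measure ℝ)) := by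
    rw [← hmeas]; exact h3
  have hd' : Integrable FD ((volume.restrict (Ioi (0:ℝ))).prod (volume : Measure ℝ)) := by
    rw [← hmeas]; exact hd
  -- Fubini
  have hA : (∫ p in halfPlane, F1 p) = ∫ z : ℝ, ∫ r in Ioi (0:ℝ), F1 (r, z) := by
    rw [show (∫ p in halfPlane, F1 p) = ∫ p, F1 p
        ∂((volume.restrict (Ioi (0:ℝ))).prod (volume : Measure ℝ)) from by rw [← hmeas]]
    exact integral_prod_symm F1 h1'
  have hB : (∫ p in halfPlane, F3 p) = ∫ z : ℝ, ∫ r in Ioi (0:ℝ), F3 (r, z) := by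
    rw [show (∫ p in halfPlane, F3 p) = ∫ p, F3 p
        ∂((volume.restrict (Ioi (0:ℝ))).prod (volume : Measure ℝ)) from by rw [← hmeas]]
    exact integral_prod_symm F3 h3'
  have hD : (∫ p in halfPlane, FD p) = ∫ z : ℝ, ∫ r in Ioi (0:ℝ), FD (r, z) := by
    rw [show (∫ p in halfPlane, FD p) = ∫ p, FD p
        ∂((volume.restrict (Ioi (0:ℝ))).prod (volume : Measure ℝ)) from by rw [← hmeas]]
    exact integral_prod_symm FD hd'
  -- slice inequality
  have hslice : ∀ᵐ z : ℝ, (∫ r in Ioi (0:ℝ), F1 (r, z)) ≤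
      (1/2) * (∫ r in Ioi (0:ℝ), F3 (r, z)) + ∫ r in Ioi (0:ℝ), FD (r, z) := by
    filter_upwards [h1'.prod_left_ae, h3'.prod_left_ae, hd'.prod_left_ae]
      with z hz1 hz3 hzd
    have hderiv : ∀ r : ℝ, HasDerivAt (fun r => ψ (r, z)) (fderiv ℝ ψ (r, z) (1, 0)) r := by
      intro r
      have hcurve : HasDerivAt (fun r : ℝ => ((r : ℝ), z)) ((1 : ℝ), (0 : ℝ)) r :=
        (hasDerivAt_id r).prodMk (hasDerivAt_const r z)
      have hψd : HasFDerivAt ψ (fderiv ℝ ψ (r, z)) (r, z) :=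
        (hψ.differentiable (by simp) (r, z)).hasFDerivAt
      exact hψd.comp_hasDerivAt r hcurve
    have hf'c : Continuous (fun r : ℝ => fderiv ℝ ψ (r, z) (1, 0)) := by
      exact ((hψ.continuous_fderiv (by simp)).comp
        (continuous_id.prodMk continuous_const)).clm_apply continuous_const
    exact oneDim_hardy (z ^ 2) (fun r => ψ (r, z)) (fun r => fderiv ℝ ψ (r, z) (1, 0))
      hderiv hf'c hz1 hz3 hzd
  -- integrate the slice inequality
  have hAint : Integrable (fun z : ℝ => ∫ r in Ioi (0:ℝ), F1 (r, z)) :=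
    h1'.integral_prod_right
  have hBint : Integrable (fun z : ℝ => ∫ r in Ioi (0:ℝ), F3 (r, z)) :=
    h3'.integral_prod_right
  have hDint : Integrable (fun z : ℝ => ∫ r in Ioi (0:ℝ), FD (r, z)) :=
    hd'.integral_prod_right
  have hfinal : (∫ z : ℝ, ∫ r in Ioi (0:ℝ), F1 (r, z)) ≤
      ∫ z : ℝ, ((1/2) * (∫ r in Ioi (0:ℝ), F3 (r, z)) + ∫ r in Ioi (0:ℝ), FD (r, z)) :=
    integral_mono_ae hAint ((hBint.const_mul (1/2)).add hDint) hslice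
  rw [integral_add (hBint.const_mul (1/2)) hDint, integral_const_mul] at hfinal
  have hBnn : 0 ≤ ∫ p in halfPlane, F3 p := by
    apply setIntegral_nonneg (measurableSet_Ioi.prod MeasurableSet.univ)
    intro p hp
    have hp1 : 0 < p.1 := hp.1
    simp only [hF3]
    positivity
  rw [hA]
  rw [hB, hD] at *
  nlinarith [hfinal, hBnn]
end

section
/- Let H be a Hilbert space with orthonormal basis of eigenvectors (ψ_{m,j}) of a nonnegative self-adjoint operator L with eigenvalues λ_0 < λ_1 < λ_2 < ⋯ (each λ_m with finite multiplicity N_m). Fix n ∈ ℕ and reals a_{n,1},…,a_{n,N_n}, set c > 0, and let f ∈ H, P_n f := Σ_j a_{n,j} ψ_{n,j} scaled by c. Then ⟨f - c P, L(f - c P)⟩ ≥ λ_{n+1} ‖f - c P‖² - Σ_{m=0}^{n-1} Σ_j (λ_{n+1} - λ_m) ⟨f, ψ_{m,j}⟩² - (λ_{n+1} - λ_n) Σ_j (⟨f, ψ_{n,j}⟩ - c a_{n,j})², where P = Σ_{j=1}^{N_n} a_{n,j} ψ_{n,j}. -/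
open scoped InnerProductSpace

theorem improved_poincare_key_inequality
    {H : Type*} [NormedAddCommGroup H] [InnerProductSpace ℝ H] [CompleteSpace H]
    (N : ℕ → ℕ) (ψ : (Σ m : ℕ, Fin (N m)) → H)
    (hON : Orthonormal ℝ ψ)
    (hbasis : (Submodule.span ℝ (Set.range ψ)).topologicalClosure = ⊤)
    (L : H →ₗ[ℝ] H)
    (hsym : ∀ x y : H, ⟪L x, y⟫_ℝ = ⟪x, L y⟫_ℝ)
    (lam : ℕ → ℝ) (hmono : StrictMono lam) (hnonneg : ∀ m, 0 ≤ lam m)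
    (heig : ∀ m (j : Fin (N m)), L (ψ ⟨m, j⟩) = lam m • ψ ⟨m, j⟩)
    (n : ℕ) (a : Fin (N n) → ℝ) (c : ℝ) (hc : 0 < c) (f : H) :
    ⟪f - c • (∑ j : Fin (N n), a j • ψ ⟨n, j⟩),
        L (f - c • (∑ j : Fin (N n), a j • ψ ⟨n, j⟩))⟫_ℝ ≥
      lam (n + 1) * ‖f - c • (∑ j : Fin (N n), a j • ψ ⟨n, j⟩)‖ ^ 2
        - ∑ m ∈ Finset.range n, ∑ j : Fin (N m),
            (lam (n + 1) - lam m) * ⟪f, ψ ⟨m, j⟩⟫_ℝ ^ 2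
        - (lam (n + 1) - lam n) * ∑ j : Fin (N n),
            (⟪f, ψ ⟨n, j⟩⟫_ℝ - c * a j) ^ 2 := by
  classical
  set g : H := f - c • (∑ j : Fin (N n), a j • ψ ⟨n, j⟩) with hgdef
  let b : HilbertBasis (Σ m : ℕ, Fin (N m)) ℝ H :=
    HilbertBasis.mk hON (le_of_eq hbasis.symm)
  have hb : ∀ ι, b ι = ψ ι := fun ι =>
    congrFun (HilbertBasis.coe_mk hON (le_of_eq hbasis.symm)) ι
  set cι : (Σ m : ℕ, Fin (N m)) → ℝ := fun ι => ⟪g, ψ ι⟫_ℝ with hcι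
  -- eigenvalue relation
  have hLc : ∀ ι : (Σ m : ℕ, Fin (N m)), ⟪ψ ι, L g⟫_ℝ = lam ι.1 * cι ι := by
    rintro ⟨m, j⟩
    rw [← hsym, heig, real_inner_smul_left]
    simp only [hcι]
    rw [real_inner_comm (ψ ⟨m, j⟩) g]
  -- summabilities
  have S1 : Summable fun ι => cι ι * cι ι := by
    refine (b.summable_inner_mul_inner g g).congr fun ι => ?_
    rw [hb ι]
    simp only [hcι]
    rw [real_inner_comm (ψ ι) g]
  have S2 : Summable fun ι => lam ι.1 * (cι ι * cι ι) := by
    refine (b.summable_inner_mul_inner g (L g)).congr fun ι => ?_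
    rw [hb ι, hLc ι]
    simp only [hcι]
    ring
  -- Parseval identities
  have hnorm : ‖g‖ ^ 2 = ∑' ι, cι ι * cι ι := by
    have := b.tsum_inner_mul_inner g g
    simp only [hb] at this
    rw [← real_inner_self_eq_norm_sq, ← this]
    exact tsum_congr fun ι => by simp only [hcι]; rw [real_inner_comm (ψ ι) g]
  have hdir : ⟪g, L g⟫_ℝ = ∑' ι, lam ι.1 * (cι ι * cι ι) := by
    have := b.tsum_inner_mul_inner g (L g)
    simp only [hb] at this
    rw [← this]
    refine tsum_congr fun ι => ?_
    rw [hLc ι]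
    simp only [hcι]
    ring
  have hmul : lam (n+1) * ‖g‖ ^ 2 = ∑' ι, lam (n+1) * (cι ι * cι ι) := by
    rw [hnorm, tsum_mul_left]
  have hdiff : ⟪g, L g⟫_ℝ - lam (n+1) * ‖g‖ ^ 2
      = ∑' ι, (lam ι.1 - lam (n+1)) * (cι ι * cι ι) := by
    rw [hdir, hmul, ← S2.tsum_sub (S1.mul_left _)]
    congr 1; funext ι; ring
  set h : (Σ m : ℕ, Fin (N m)) → ℝ :=
    fun ι => (lam ι.1 - lam (n+1)) * (cι ι * cι ι) with hh
  have Sh : Summable h := by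
    have := S2.sub (S1.mul_left (lam (n+1)))
    exact this.congr fun ι => by show _ = (lam ι.1 - lam (n+1)) * (cι ι * cι ι); ring
  set S : Finset (Σ m : ℕ, Fin (N m)) :=
    (Finset.range (n+1)).sigma (fun m => (Finset.univ : Finset (Fin (N m)))) with hS
  have hkey : ∑ ι ∈ S, h ι ≤ ∑' ι, h ι := by
    refine Sh.sum_le_tsum S (fun ι hι => ?_)
    have h1 : n + 1 ≤ ι.1 := by
      by_contra hlt
      exact hι (Finset.mem_sigma.2 ⟨Finset.mem_range.2 (not_le.1 hlt), Finset.mem_univ _⟩)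
    have h2 : lam (n+1) ≤ lam ι.1 := hmono.monotone h1
    simp only [hh]
    exact mul_nonneg (by linarith) (mul_self_nonneg _)
  -- compute coefficients
  have hcval : ∀ (m : ℕ) (j : Fin (N m)),
      cι ⟨m, j⟩ = ⟪f, ψ ⟨m, j⟩⟫_ℝ - (if hm : m = n then c * a (hm ▸ j) else 0) := by
    intro m j
    have : ⟪(∑ k : Fin (N n), a k • ψ ⟨n, k⟩), ψ ⟨m, j⟩⟫_ℝ
        = if hm : m = n then a (hm ▸ j) else 0 := by
      rw [sum_inner]
      by_cases hm : m = n
      · subst hm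
        rw [dif_pos rfl]
        rw [Finset.sum_eq_single j]
        · rw [real_inner_smul_left, orthonormal_iff_ite.mp hON ⟨m, j⟩ ⟨m, j⟩,
            if_pos rfl, mul_one]
        · intro k _ hk
          rw [real_inner_smul_left, orthonormal_iff_ite.mp hON ⟨m, k⟩ ⟨m, j⟩,
            if_neg (by simp [hk]), mul_zero]
        · simp
      · rw [dif_neg hm]
        refine Finset.sum_eq_zero fun k _ => ?_
        rw [real_inner_smul_left, orthonormal_iff_ite.mp hON ⟨n, k⟩ ⟨m, j⟩,
            if_neg (by simp [Ne.symm hm]), mul_zero]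
    simp only [hcι, hgdef, inner_sub_left, real_inner_smul_left, this]
    by_cases hm : m = n
    · subst hm; simp
    · simp [hm]
  have hsumS : ∑ ι ∈ S, h ι
      = -(∑ m ∈ Finset.range n, ∑ j : Fin (N m),
            (lam (n + 1) - lam m) * ⟪f, ψ ⟨m, j⟩⟫_ℝ ^ 2)
        - (lam (n + 1) - lam n) * ∑ j : Fin (N n),
            (⟪f, ψ ⟨n, j⟩⟫_ℝ - c * a j) ^ 2 := by
    rw [hS, Finset.sum_sigma, Finset.sum_range_succ]
    have hlow : ∀ m ∈ Finset.range n, ∑ j : Fin (N m), h ⟨m, j⟩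
        = -∑ j : Fin (N m), (lam (n + 1) - lam m) * ⟪f, ψ ⟨m, j⟩⟫_ℝ ^ 2 := by
      intro m hm
      rw [← Finset.sum_neg_distrib]
      refine Finset.sum_congr rfl fun j _ => ?_
      have hmn : m ≠ n := Nat.ne_of_lt (Finset.mem_range.1 hm)
      rw [hh]
      simp only [hcval m j, dif_neg hmn]
      ring
    have hn : ∑ j : Fin (N n), h ⟨n, j⟩
        = -((lam (n + 1) - lam n) * ∑ j : Fin (N n),
            (⟪f, ψ ⟨n, j⟩⟫_ℝ - c * a j) ^ 2) := by
      rw [Finset.mul_sum, ← Finset.sum_neg_distrib]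
      refine Finset.sum_congr rfl fun j _ => ?_
      rw [hh]
      simp only []
      rw [hcval n j, dif_pos rfl]
      ring
    rw [Finset.sum_congr rfl hlow, hn, Finset.sum_neg_distrib]
    ring
  have := hkey
  rw [hsumS, ← hdiff] at this
  linarith
end
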